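/- Let p̃ be a probability mass function on ℕ with finite support whose support, listed in increasing order, is x₁ < x₂ < … < x_N, let s̃ = x_N, and let p̂ be the constrained least squares estimator with ŝ the maximum of its support. Then: (a) p̂ is linear on {0, …, x₁ + 1}, i.e., p̂(k+1) − 2 p̂(k) + p̂(k−1) = 0 for all 1 ≤ k ≤ x₁; (b) p̂ is linear on {s̃ − 1, …, ŝ}, i.e., p̂(k+1) − 2 p̂(k) + p̂(k−1) = 0 for all s̃ ≤ k ≤ ŝ − 1; (c) if N ≥ 2, then for each 1 ≤ j ≤ N − 1 the set of points l with x_j ≤ l ≤ x_{j+1} at which p̂ has a change of slope (i.e., p̂(l+1) − 2 p̂(l) + p̂(l−1) > 0) has at most two elements, and if it has exactly two elements they are consecutive integers. -/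

import Mathlib

open scoped BigOperators

noncomputable section

/-- A discrete function `f : ℕ → ℝ` is convex if
`f(i+1) - 2 f(i) + f(i-1) ≥ 0` for every `i ≥ 1`. -/
def ConvexNat (f : ℕ → ℝ) : Prop :=
  ∀ i : ℕ, 0 ≤ f (i + 2) - 2 * f (i + 1) + f i

/-- `𝒦`: convex, nonnegative functions on `ℕ` tending to `0` at infinity. -/
def MemK (f : ℕ → ℝ) : Prop :=
  ConvexNat f ∧ (∀ i, 0 ≤ f i) ∧ Filter.Tendsto f Filter.atTop (nhds 0)

/-- `𝒞`: elements of `𝒦` summing to one. -/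
def MemC (f : ℕ → ℝ) : Prop := MemK f ∧ ∑' i, f i = 1

/-- The least squares criterion `Q(f) = (1/2) ∑ f(i)² − ∑ f(i) p̃(i)`. -/
def Crit (ptil f : ℕ → ℝ) : ℝ :=
  (1 / 2) * ∑' i, (f i) ^ 2 - ∑' i, f i * ptil i

/-- A probability mass function on `ℕ` with finite support. -/
def IsFinPMF (p : ℕ → ℝ) : Prop :=
  (∀ i, 0 ≤ p i) ∧ (Function.support p).Finite ∧ ∑' i, p i = 1

/-- `s` is the maximum of the support of `p`. -/
def IsMaxSupport (p : ℕ → ℝ) (s : ℕ) : Prop :=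
  p s ≠ 0 ∧ ∀ i, p i ≠ 0 → i ≤ s

/-!
Testing the minimality of `p̂` against the perturbations `p̂ ± ε T_j`, where `T_j(i) = (j - i)⁺`
is the tent whose only kink is at `j`, shows that `Φ(j) = ∑_{i<j} (j - i) (p̂(i) - p̃(i))` is
nonnegative for every `j` and vanishes at every change of slope `l` of `p̂` (only there does
`p̂ - ε T_l` stay convex). The second difference of `Φ` at `l` is `p̂(l) - p̃(l)`, so `Φ` is convex
on any stretch free of support points of `p̃`; being nonnegative, it vanishes between two of its
zeros, which forces `p̂` to vanish strictly between them. Each part picks two zeros of `Φ` — `0` and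
a change of slope, a change of slope and the kink at `ŝ + 1`, two changes of slope between
consecutive support points — and the vanishing of `p̂` in between contradicts `p̂(ŝ) ≠ 0` or the
second change of slope.
-/

open Filter Topology Function

def secondDiff (f : ℕ → ℝ) (i : ℕ) : ℝ := f (i + 2) - 2 * f (i + 1) + f i

lemma secondDiff_sub (f g : ℕ → ℝ) (i : ℕ) :
    secondDiff (fun j => f j - g j) i = secondDiff f i - secondDiff g i := by
  unfold secondDiff
  ring

lemma secondDiff_add_mul (f g : ℕ → ℝ) (ε : ℝ) (i : ℕ) :
    secondDiff (fun j => f j + ε * g j) i = secondDiff f i + ε * secondDiff g i := by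
  unfold secondDiff
  ring

namespace ConvexNat

variable {f : ℕ → ℝ}

lemma monotone_sub (hf : ConvexNat f) : Monotone fun i => f (i + 1) - f i :=
  monotone_nat_of_le_succ fun i => by linarith [hf i]

lemma antitone (hf : ConvexNat f) (h0 : Tendsto f atTop (𝓝 0)) : Antitone f := by
  have hdiff : Tendsto (fun i => f (i + 1) - f i) atTop (𝓝 0) := by
    simpa using (h0.comp (tendsto_add_atTop_nat 1)).sub h0
  exact antitone_nat_of_succ_le fun i => by
    linarith [hf.monotone_sub.ge_of_tendsto hdiff i]

lemma memK (hf : ConvexNat f) (h0 : Tendsto f atTop (𝓝 0)) : MemK f :=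
  ⟨hf, (hf.antitone h0).le_of_tendsto h0, h0⟩

end ConvexNat

namespace MemK

variable {f : ℕ → ℝ}

lemma apply_eq_zero_of_le (hf : MemK f) {m i : ℕ} (hm : f m = 0) (hmi : m ≤ i) : f i = 0 :=
  le_antisymm (hm ▸ hf.1.antitone hf.2.2 hmi) (hf.2.1 i)

end MemK

lemma IsMaxSupport.apply_eq_zero {p : ℕ → ℝ} {s i : ℕ} (hs : IsMaxSupport p s) (hi : s < i) :
    p i = 0 :=
  not_not.mp fun hpi => absurd (hs.2 i hpi) (not_le.mpr hi)

lemma eq_zero_of_secondDiff_nonneg {φ : ℕ → ℝ} {a b : ℕ} (hφ : ∀ i, 0 ≤ φ i)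
    (ha : φ a = 0) (hb : φ b = 0) (hconv : ∀ t, a ≤ t → t + 2 ≤ b → 0 ≤ secondDiff φ t)
    {i : ℕ} (hai : a ≤ i) (hib : i ≤ b) : φ i = 0 := by
  simp only [secondDiff] at hconv
  have hincr : ∀ t, a ≤ t → t < b → φ t ≤ φ (t + 1) := by
    intro t hat
    induction t, hat using Nat.le_induction with
    | base => intro _; linarith [hφ (a + 1)]
    | succ t hat ih =>
      intro htb
      linarith [ih (by omega), hconv t hat htb]
  have hmono : ∀ j, i ≤ j → j ≤ b → φ i ≤ φ j := by
    intro j hij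
    induction j, hij using Nat.le_induction with
    | base => intro _; exact le_rfl
    | succ j hij ih =>
      intro hjb
      exact (ih (by omega)).trans (hincr j (by omega) hjb)
  exact le_antisymm (hb ▸ hmono b hib le_rfl) (hφ i)

def tri (j i : ℕ) : ℝ := ((j - i : ℕ) : ℝ)

lemma tri_eq_zero {j i : ℕ} (h : j ≤ i) : tri j i = 0 := by
  simp [tri, Nat.sub_eq_zero_of_le h]

lemma hasFiniteSupport_tri (j : ℕ) : HasFiniteSupport (tri j) :=
  (Set.finite_Iio j).subset fun _ hi => not_le.mp fun h => hi (tri_eq_zero h)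

lemma tendsto_tri (j : ℕ) : Tendsto (tri j) atTop (𝓝 0) :=
  tendsto_const_nhds.congr' <| eventually_atTop.mpr ⟨j, fun _ h => (tri_eq_zero h).symm⟩

lemma secondDiff_tri (j i : ℕ) : secondDiff (tri j) i = if j = i + 1 then 1 else 0 := by
  unfold secondDiff tri
  rcases le_or_gt (i + 2) j with h | h
  · rw [if_neg (by omega), Nat.cast_sub h, Nat.cast_sub (by omega : i + 1 ≤ j),
      Nat.cast_sub (by omega : i ≤ j)]
    push_cast
    ring
  · rw [Nat.sub_eq_zero_of_le (by omega : j ≤ i + 2), Nat.sub_eq_zero_of_le (by omega : j ≤ i + 1)]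
    split_ifs with hj
    · simp [hj]
    · simp [Nat.sub_eq_zero_of_le (by omega : j ≤ i)]

def Phi (f : ℕ → ℝ) (j : ℕ) : ℝ := ∑ i ∈ Finset.range j, tri j i * f i

lemma tsum_tri_mul (f : ℕ → ℝ) (j : ℕ) : ∑' i, tri j i * f i = Phi f j :=
  tsum_eq_sum fun i hi => by rw [tri_eq_zero (not_lt.mp (Finset.mem_range.not.mp hi)), zero_mul]

lemma Phi_succ (f : ℕ → ℝ) (j : ℕ) :
    Phi f (j + 1) = Phi f j + ∑ i ∈ Finset.range (j + 1), f i := by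
  have htri : ∀ i ∈ Finset.range (j + 1), tri (j + 1) i * f i = tri j i * f i + f i := by
    intro i hi
    rw [tri, tri, Nat.sub_add_comm (Finset.mem_range_succ_iff.mp hi)]
    push_cast
    ring
  rw [Phi, Finset.sum_congr rfl htri, Finset.sum_add_distrib, Finset.sum_range_succ _ j,
    tri_eq_zero le_rfl, zero_mul, add_zero, Phi]

lemma secondDiff_Phi (f : ℕ → ℝ) (t : ℕ) : secondDiff (Phi f) t = f (t + 1) := by
  rw [secondDiff, Phi_succ f (t + 1), Phi_succ f t, Finset.sum_range_succ _ (t + 1)]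
  ring

@[simp] lemma Phi_zero (f : ℕ → ℝ) : Phi f 0 = 0 := rfl

lemma crit_add_mul {ptil phat g : ℕ → ℝ} (hptil : HasFiniteSupport ptil)
    (hphat : Summable fun i => phat i ^ 2) (hg : HasFiniteSupport g) (ε : ℝ) :
    Summable (fun i => (phat i + ε * g i) ^ 2) ∧
      Crit ptil (fun i => phat i + ε * g i) = Crit ptil phat
        + ε * (∑' i, g i * phat i - ∑' i, g i * ptil i) + ε ^ 2 / 2 * ∑' i, g i ^ 2 := by
  have hgphat : Summable fun i => g i * phat i := summable_of_hasFiniteSupport (hg.mul_left phat)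
  have hg2 : Summable fun i => g i ^ 2 :=
    (summable_of_hasFiniteSupport (hg.mul_left g)).congr fun i => by simp [sq]
  have hphatptil : Summable fun i => phat i * ptil i :=
    summable_of_hasFiniteSupport (hptil.mul_right phat)
  have hgptil : Summable fun i => g i * ptil i := summable_of_hasFiniteSupport (hptil.mul_right g)
  have hcross : Summable fun i => 2 * ε * (g i * phat i) + ε ^ 2 * g i ^ 2 :=
    (hgphat.mul_left _).add (hg2.mul_left _)
  have hsq : ∑' i, (phat i + ε * g i) ^ 2
      = ∑' i, phat i ^ 2 + 2 * ε * ∑' i, g i * phat i + ε ^ 2 * ∑' i, g i ^ 2 := by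
    rw [tsum_congr fun i => (by ring : (phat i + ε * g i) ^ 2
        = phat i ^ 2 + (2 * ε * (g i * phat i) + ε ^ 2 * g i ^ 2)),
      hphat.tsum_add hcross, (hgphat.mul_left _).tsum_add (hg2.mul_left _), tsum_mul_left,
      tsum_mul_left, add_assoc]
  have hlin : ∑' i, (phat i + ε * g i) * ptil i
      = ∑' i, phat i * ptil i + ε * ∑' i, g i * ptil i := by
    rw [tsum_congr fun i => (by ring : (phat i + ε * g i) * ptil i
        = phat i * ptil i + ε * (g i * ptil i)), hphatptil.tsum_add (hgptil.mul_left _),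
      tsum_mul_left]
  refine ⟨(hphat.add hcross).congr fun i => by ring, ?_⟩
  rw [Crit, Crit, hsq, hlin]
  ring

structure IsLSE (ptil phat : ℕ → ℝ) : Prop where
  memK : MemK phat
  summable_sq : Summable fun i => phat i ^ 2
  crit_le : ∀ f, MemK f → (Summable fun i => f i ^ 2) → Crit ptil phat ≤ Crit ptil f

lemma MemK.add_mul_tri {f : ℕ → ℝ} (hf : MemK f) (j : ℕ) {ε : ℝ} (hε : 0 ≤ ε) :
    MemK fun i => f i + ε * tri j i := by
  refine ConvexNat.memK (fun i => ?_) (by simpa using hf.2.2.add ((tendsto_tri j).const_mul ε))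
  change 0 ≤ secondDiff (fun i => f i + ε * tri j i) i
  rw [secondDiff_add_mul, secondDiff_tri]
  exact add_nonneg (hf.1 i) (mul_nonneg hε (by split_ifs <;> norm_num))

lemma MemK.sub_mul_tri {f : ℕ → ℝ} (hf : MemK f) {m : ℕ} {ε : ℝ}
    (hεm : ε ≤ secondDiff f m) : MemK fun i => f i + ε * -tri (m + 1) i := by
  refine ConvexNat.memK (fun i => ?_)
    (by simpa using hf.2.2.add (((tendsto_tri (m + 1)).neg).const_mul ε))
  change 0 ≤ secondDiff (fun i => f i + ε * -tri (m + 1) i) i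
  rw [show secondDiff (fun j => f j + ε * -tri (m + 1) j) i
      = secondDiff f i - ε * secondDiff (tri (m + 1)) i by unfold secondDiff; ring,
    secondDiff_tri]
  split_ifs with him
  · cases Nat.succ_injective him
    linarith
  · rw [mul_zero, sub_zero]
    exact hf.1 i

lemma nonneg_of_forall_small {a c ε₀ : ℝ} (hε₀ : 0 < ε₀)
    (h : ∀ ε, 0 < ε → ε ≤ ε₀ → 0 ≤ ε * a + ε ^ 2 * c) : 0 ≤ a := by
  have hlim : Tendsto (fun ε => a + ε * c) (𝓝[>] 0) (𝓝 a) :=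
    tendsto_nhdsWithin_of_tendsto_nhds <| by
      simpa using Continuous.tendsto (f := fun ε : ℝ => a + ε * c) (by fun_prop) 0
  refine ge_of_tendsto hlim ?_
  filter_upwards [Ioc_mem_nhdsGT hε₀] with ε ⟨hε, hεle⟩
  have := h ε hε hεle
  exact (mul_nonneg_iff_of_pos_left hε).mp (by linarith)

namespace IsLSE

variable {ptil phat : ℕ → ℝ}

lemma variational (h : IsLSE ptil phat) (hptil : HasFiniteSupport ptil) {g : ℕ → ℝ}
    (hg : HasFiniteSupport g) {ε₀ : ℝ} (hε₀ : 0 < ε₀)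
    (hK : ∀ ε, 0 < ε → ε ≤ ε₀ → MemK fun i => phat i + ε * g i) :
    ∑' i, g i * ptil i ≤ ∑' i, g i * phat i := by
  refine sub_nonneg.mp (nonneg_of_forall_small (c := (∑' i, g i ^ 2) / 2) hε₀ fun ε hε hεle => ?_)
  obtain ⟨hsum, hcrit⟩ := crit_add_mul hptil h.summable_sq hg ε
  have := h.crit_le _ (hK ε hε hεle) hsum
  rw [hcrit] at this
  linarith

lemma Phi_le (h : IsLSE ptil phat) (hptil : HasFiniteSupport ptil) (j : ℕ) :
    Phi ptil j ≤ Phi phat j := by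
  simpa only [tsum_tri_mul] using h.variational hptil (hasFiniteSupport_tri j) one_pos
    fun ε hε _ => h.memK.add_mul_tri j hε.le

lemma Phi_eq_of_secondDiff_pos (h : IsLSE ptil phat) (hptil : HasFiniteSupport ptil) {m : ℕ}
    (hm : 0 < secondDiff phat m) : Phi phat (m + 1) = Phi ptil (m + 1) := by
  have := h.variational hptil (g := fun i => -tri (m + 1) i) (hasFiniteSupport_tri _).neg hm
    fun _ _ hεm => h.memK.sub_mul_tri hεm
  simp only [neg_mul, tsum_neg, tsum_tri_mul] at this
  exact le_antisymm (by linarith) (h.Phi_le hptil _)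

lemma Phi_eq_of_slope_ne_zero (h : IsLSE ptil phat) (hptil : HasFiniteSupport ptil) {l : ℕ}
    (hl : phat (l + 1) - 2 * phat l + phat (l - 1) ≠ 0) : Phi phat l = Phi ptil l := by
  -- at `l = 0` the truncated `l - 1` turns `hl` into `p̂ 1 ≠ p̂ 0`, but `Φ 0 = 0` regardless
  cases l with
  | zero => simp
  | succ m =>
    have hm : secondDiff phat m ≠ 0 := fun h0 => hl (by simpa [secondDiff] using h0)
    exact h.Phi_eq_of_secondDiff_pos hptil (lt_of_le_of_ne (h.memK.1 m) hm.symm)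

lemma Phi_eq_of_between (h : IsLSE ptil phat) (hptil : HasFiniteSupport ptil) {a b : ℕ}
    (ha : Phi phat a = Phi ptil a) (hb : Phi phat b = Phi ptil b)
    (hzero : ∀ m, a < m → m < b → ptil m = 0) {i : ℕ} (hai : a ≤ i) (hib : i ≤ b) :
    Phi phat i = Phi ptil i := by
  refine sub_eq_zero.mp (eq_zero_of_secondDiff_nonneg (φ := fun j => Phi phat j - Phi ptil j)
    (fun j => sub_nonneg.mpr (h.Phi_le hptil j)) (sub_eq_zero.mpr ha) (sub_eq_zero.mpr hb)
    (fun t hat htb => ?_) hai hib)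
  rw [secondDiff_sub, secondDiff_Phi, secondDiff_Phi, hzero (t + 1) (by omega) (by omega),
    sub_zero]
  exact h.memK.2.1 _

lemma eq_zero_of_between (h : IsLSE ptil phat) (hptil : HasFiniteSupport ptil) {a b : ℕ}
    (ha : Phi phat a = Phi ptil a) (hb : Phi phat b = Phi ptil b)
    (hzero : ∀ m, a < m → m < b → ptil m = 0) {t : ℕ} (hat : a ≤ t) (htb : t + 2 ≤ b) :
    phat (t + 1) = 0 := by
  have hgap : ∀ i, t ≤ i → i ≤ t + 2 → Phi phat i = Phi ptil i := fun i hti hit =>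
    h.Phi_eq_of_between hptil ha hb hzero (hat.trans hti) (hit.trans htb)
  have hsd := congrArg₂ (· - ·) (secondDiff_Phi phat t) (secondDiff_Phi ptil t)
  simp only [secondDiff, hgap t le_rfl (by omega), hgap (t + 1) (by omega) (by omega),
    hgap (t + 2) (by omega) le_rfl, sub_self, hzero (t + 1) (by omega) (by omega)] at hsd
  linarith

lemma slope_eq_zero_of_below_support (h : IsLSE ptil phat) (hptil : HasFiniteSupport ptil)
    (hne : phat ≠ 0) {k : ℕ} (hk : 1 ≤ k) (hzero : ∀ m < k, ptil m = 0) :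
    phat (k + 1) - 2 * phat k + phat (k - 1) = 0 := by
  by_contra hl
  have hgap := h.Phi_eq_of_between hptil (a := 0) rfl (h.Phi_eq_of_slope_ne_zero hptil hl)
    (fun m _ hm => hzero m hm) zero_le_one hk
  simp only [Phi, Finset.sum_range_one, tri, Nat.sub_zero, Nat.cast_one, one_mul] at hgap
  rw [hzero 0 hk] at hgap
  exact hne (funext fun i => h.memK.apply_eq_zero_of_le hgap (Nat.zero_le i))

lemma slope_eq_zero_of_above_support (h : IsLSE ptil phat) (hptil : HasFiniteSupport ptil)
    {s : ℕ} (hs : IsMaxSupport phat s) {k : ℕ} (hks : k + 1 ≤ s)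
    (hzero : ∀ m, k < m → ptil m = 0) :
    phat (k + 1) - 2 * phat k + phat (k - 1) = 0 := by
  by_contra hl
  have hlast : 0 < secondDiff phat s := by
    rw [secondDiff, hs.apply_eq_zero (by omega), hs.apply_eq_zero (by omega)]
    linarith [lt_of_le_of_ne (h.memK.2.1 s) (Ne.symm hs.1)]
  obtain ⟨t, rfl⟩ : ∃ t, s = t + 1 := ⟨s - 1, by omega⟩
  exact hs.1 (h.eq_zero_of_between hptil (h.Phi_eq_of_slope_ne_zero hptil hl)
    (h.Phi_eq_of_secondDiff_pos hptil hlast) (fun m hkm _ => hzero m hkm) (by omega) le_rfl)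

lemma eq_succ_of_slope_changes (h : IsLSE ptil phat) (hptil : HasFiniteSupport ptil)
    {l₁ l₂ : ℕ} (h₁ : 0 < phat (l₁ + 1) - 2 * phat l₁ + phat (l₁ - 1))
    (h₂ : 0 < phat (l₂ + 1) - 2 * phat l₂ + phat (l₂ - 1)) (hlt : l₁ < l₂)
    (hzero : ∀ m, l₁ < m → m < l₂ → ptil m = 0) : l₂ = l₁ + 1 := by
  by_contra hne
  obtain ⟨t, rfl⟩ : ∃ t, l₂ = t + 2 := ⟨l₂ - 2, by omega⟩
  have hphat_t : phat (t + 1) = 0 :=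
    h.eq_zero_of_between hptil (h.Phi_eq_of_slope_ne_zero hptil h₁.ne')
      (h.Phi_eq_of_slope_ne_zero hptil h₂.ne') hzero (by omega) le_rfl
  rw [h.memK.apply_eq_zero_of_le hphat_t (by omega),
    h.memK.apply_eq_zero_of_le hphat_t (by omega), show t + 2 - 1 = t + 1 by omega, hphat_t] at h₂
  norm_num at h₂

end IsLSE

theorem stmt_15_general (ptil : ℕ → ℝ) (hptil : IsFinPMF ptil)
    (N : ℕ) (x : ℕ → ℕ)
    (hmono : ∀ i j : ℕ, 1 ≤ i → i < j → j ≤ N → x i < x j)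
    (hsupp : ∀ k : ℕ, ptil k ≠ 0 ↔ ∃ i : ℕ, 1 ≤ i ∧ i ≤ N ∧ x i = k)
    (phat : ℕ → ℝ) (hphatK : MemK phat)
    (hphat2 : Summable (fun i => (phat i) ^ 2))
    (hmin : ∀ f : ℕ → ℝ, MemK f → Summable (fun i => (f i) ^ 2) →
      Crit ptil phat ≤ Crit ptil f)
    (shat : ℕ) (hshat : IsMaxSupport phat shat) :
    (∀ k : ℕ, 1 ≤ k → k ≤ x 1 →
      phat (k + 1) - 2 * phat k + phat (k - 1) = 0) ∧
    (∀ k : ℕ, x N ≤ k → k + 1 ≤ shat →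
      phat (k + 1) - 2 * phat k + phat (k - 1) = 0) ∧
    (2 ≤ N → ∀ j : ℕ, 1 ≤ j → j + 1 ≤ N →
      ∀ l₁ l₂ : ℕ,
        (1 ≤ l₁ ∧ x j ≤ l₁ ∧ l₁ ≤ x (j + 1) ∧
          0 < phat (l₁ + 1) - 2 * phat l₁ + phat (l₁ - 1)) →
        (1 ≤ l₂ ∧ x j ≤ l₂ ∧ l₂ ≤ x (j + 1) ∧
          0 < phat (l₂ + 1) - 2 * phat l₂ + phat (l₂ - 1)) →
        l₁ < l₂ → l₂ = l₁ + 1) := by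
  have h : IsLSE ptil phat := ⟨hphatK, hphat2, hmin⟩
  have hfin : HasFiniteSupport ptil := hptil.2.1
  have hxle : ∀ i j, 1 ≤ i → i ≤ j → j ≤ N → x i ≤ x j := fun i j hi hij hj =>
    hij.eq_or_lt.elim (fun e => e ▸ le_rfl) fun hlt => (hmono i j hi hlt hj).le
  have hzero : ∀ m, (∀ i, 1 ≤ i → i ≤ N → x i ≠ m) → ptil m = 0 := fun m hm =>
    not_not.mp fun hne => let ⟨i, hi, hiN, hxi⟩ := (hsupp m).1 hne; hm i hi hiN hxi
  refine ⟨fun k hk hkx => h.slope_eq_zero_of_below_support hfin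
      (fun h0 => hshat.1 (congrFun h0 shat)) hk fun m hm => hzero m fun i hi hiN => ?_,
    fun k hk hks => h.slope_eq_zero_of_above_support hfin hshat hks
      fun m hm => hzero m fun i hi hiN => ?_,
    fun _ j hj hjN l₁ l₂ h₁ h₂ hlt => h.eq_succ_of_slope_changes hfin h₁.2.2.2 h₂.2.2.2 hlt
      fun m h₁m hm₂ => hzero m fun i hi hiN => ?_⟩
  · have := hxle 1 i le_rfl hi hiN
    omega
  · have := hxle i N hi hiN le_rfl
    omega
  · rcases le_or_gt i j with hij | hij
    · have := hxle i j hi hij (by omega)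
      omega
    · have := hxle (j + 1) i (by omega) hij hiN
      omega

/-- Lemma 4: with the support of `p̃` listed as `x₁ < … < x_N` and `s̃ = x_N`,
the constrained LSE `p̂` (with support maximum `ŝ`) is
(a) linear on `{0,…,x₁+1}`, (b) linear on `{s̃−1,…,ŝ}`, and
(c) for `N ≥ 2` and `1 ≤ j ≤ N−1`, any two distinct points of `{x_j,…,x_{j+1}}`
at which `p̂` has a change of slope are consecutive integers (in particular there are
at most two such points). -/
theorem stmt_15 (ptil : ℕ → ℝ) (hptil : IsFinPMF ptil)
    (N : ℕ) (hN : 1 ≤ N) (x : ℕ → ℕ)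
    (hmono : ∀ i j : ℕ, 1 ≤ i → i < j → j ≤ N → x i < x j)
    (hsupp : ∀ k : ℕ, ptil k ≠ 0 ↔ ∃ i : ℕ, 1 ≤ i ∧ i ≤ N ∧ x i = k)
    (phat : ℕ → ℝ) (hphatK : MemK phat)
    (hphat2 : Summable (fun i => (phat i) ^ 2))
    (hmin : ∀ f : ℕ → ℝ, MemK f → Summable (fun i => (f i) ^ 2) →
      Crit ptil phat ≤ Crit ptil f)
    (shat : ℕ) (hshat : IsMaxSupport phat shat) :
    (∀ k : ℕ, 1 ≤ k → k ≤ x 1 →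
      phat (k + 1) - 2 * phat k + phat (k - 1) = 0) ∧
    (∀ k : ℕ, x N ≤ k → k + 1 ≤ shat →
      phat (k + 1) - 2 * phat k + phat (k - 1) = 0) ∧
    (2 ≤ N → ∀ j : ℕ, 1 ≤ j → j + 1 ≤ N →
      ∀ l₁ l₂ : ℕ,
        (1 ≤ l₁ ∧ x j ≤ l₁ ∧ l₁ ≤ x (j + 1) ∧
          0 < phat (l₁ + 1) - 2 * phat l₁ + phat (l₁ - 1)) →
        (1 ≤ l₂ ∧ x j ≤ l₂ ∧ l₂ ≤ x (j + 1) ∧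
          0 < phat (l₂ + 1) - 2 * phat l₂ + phat (l₂ - 1)) →
        l₁ < l₂ → l₂ = l₁ + 1) :=
  stmt_15_general ptil hptil N x hmono hsupp phat hphatK hphat2 hmin shat hshat
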